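/- arXiv:2103.06555 — 4 statements merged into one kernel-verified Lean document; each statement's English description precedes it below -/
import Mathlib

section
/- Let 𝒜 be an abelian category and let f : X ⟶ Y be a morphism in 𝒜. Then the pushout of f along itself (the cokernel pair of f) is isomorphic to the biproduct Y ⊕ coker(f). In symbols: pushout f f ≅ Y ⊞ cokernel f. -/
open CategoryTheory CategoryTheory.Limits

/-!
The two legs of the cokernel pair agree on `f`, so their difference factors through
`cokernel f`. Hence `pushout f f` is generated by its first leg and this difference, and the
map sending the first leg to `Y` and the second to the sum of `Y` and `cokernel f` is inverse
to the map built from them.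
-/

namespace CategoryTheory.Limits

variable {C : Type*} [Category C] [Preadditive C] {X Y : C} (f : X ⟶ Y)
  [HasPushout f f] [HasCokernel f] [HasBinaryBiproduct Y (cokernel f)]

noncomputable def pushoutSelfToBiprodCokernel : pushout f f ⟶ Y ⊞ cokernel f :=
  pushout.desc biprod.inl (biprod.inl + cokernel.π f ≫ biprod.inr) (by simp)

noncomputable def biprodCokernelToPushoutSelf : Y ⊞ cokernel f ⟶ pushout f f :=
  biprod.desc (pushout.inl f f)
    (cokernel.desc f (pushout.inr f f - pushout.inl f f) (by simp [pushout.condition]))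

@[simp]
lemma inl_pushoutSelfToBiprodCokernel :
    pushout.inl f f ≫ pushoutSelfToBiprodCokernel f = biprod.inl :=
  pushout.inl_desc _ _ _

@[simp]
lemma inr_pushoutSelfToBiprodCokernel :
    pushout.inr f f ≫ pushoutSelfToBiprodCokernel f = biprod.inl + cokernel.π f ≫ biprod.inr :=
  pushout.inr_desc _ _ _

@[simp]
lemma inl_biprodCokernelToPushoutSelf :
    biprod.inl ≫ biprodCokernelToPushoutSelf f = pushout.inl f f :=
  biprod.inl_desc _ _

@[simp]
lemma π_inr_biprodCokernelToPushoutSelf :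
    cokernel.π f ≫ biprod.inr ≫ biprodCokernelToPushoutSelf f =
      pushout.inr f f - pushout.inl f f := by
  simp [biprodCokernelToPushoutSelf]

noncomputable def pushoutSelfIsoBiprodCokernel : pushout f f ≅ Y ⊞ cokernel f where
  hom := pushoutSelfToBiprodCokernel f
  inv := biprodCokernelToPushoutSelf f
  hom_inv_id := by
    apply pushout.hom_ext
    · rw [← Category.assoc, inl_pushoutSelfToBiprodCokernel, inl_biprodCokernelToPushoutSelf,
        Category.comp_id]
    · rw [← Category.assoc, inr_pushoutSelfToBiprodCokernel, Preadditive.add_comp,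
        inl_biprodCokernelToPushoutSelf, Category.assoc, π_inr_biprodCokernelToPushoutSelf,
        add_sub_cancel, Category.comp_id]
  inv_hom_id := by
    apply biprod.hom_ext'
    · rw [← Category.assoc, inl_biprodCokernelToPushoutSelf, inl_pushoutSelfToBiprodCokernel,
        Category.comp_id]
    · apply coequalizer.hom_ext
      rw [← Category.assoc, ← Category.assoc, Category.assoc (cokernel.π f),
        π_inr_biprodCokernelToPushoutSelf, Preadditive.sub_comp, inr_pushoutSelfToBiprodCokernel,
        inl_pushoutSelfToBiprodCokernel, add_sub_cancel_left, Category.comp_id]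

end CategoryTheory.Limits

/-- In an abelian category, the pushout of a morphism `f : X ⟶ Y` along itself
(the cokernel pair of `f`) is isomorphic to the biproduct `Y ⊞ cokernel f`. -/
theorem pushout_self_iso_biprod_cokernel {𝒜 : Type*} [Category 𝒜] [Abelian 𝒜]
    {X Y : 𝒜} (f : X ⟶ Y) :
    Nonempty (pushout f f ≅ Y ⊞ cokernel f) :=
  ⟨pushoutSelfIsoBiprodCokernel f⟩
end

section
/- Let R be a commutative ring, let f : M → N be an R-linear map of R-modules, and let n be a natural number. Define the R-linear map g : M^n → N^{n+1} whose j-th component (0 ≤ j ≤ n) sends (x_1, …, x_n) to f(x_{j+1}) − f(x_j), with the convention x_0 = x_{n+1} = 0 (so each x_i contributes +f(x_i) in slot i−1 and −f(x_i) in slot i). Then the cokernel of g is isomorphic, as an R-module, to N × (N ⧸ range f)^n. -/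
/-!
Partial sums `σₖ(y) = y₀ + ⋯ + y_{k-1}` telescope the difference map `g` into
`x ↦ (f x₁, …, f xₙ, 0)`. Hence `y ↦ (σₙ₊₁(y), (σₖ(y) mod range f)_{1 ≤ k ≤ n})` is a surjection
`Nⁿ⁺¹ → N × (N ⧸ range f)ⁿ` whose kernel is exactly `range g`.
-/

open Finset Fin.NatCast

namespace CechConerve

variable {R M N : Type*} [Ring R] [AddCommGroup M] [Module R M] [AddCommGroup N] [Module R N]

variable (R) in
/-- `xᵢ` in the `1`-based indexing `x₁, …, xₙ`, padded by `x₀ = 0` and `xᵢ = 0` for `i > n`. -/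
def padZero (n i : ℕ) : (Fin n → M) →ₗ[R] M :=
  if h : 1 ≤ i ∧ i ≤ n then LinearMap.proj (⟨i - 1, Nat.sub_one_lt_of_le h.1 h.2⟩ : Fin n) else 0

theorem padZero_zero (n : ℕ) : (padZero R n 0 : (Fin n → M) →ₗ[R] M) = 0 :=
  dif_neg (by omega)

theorem padZero_of_lt (n : ℕ) {i : ℕ} (hi : n < i) : (padZero R n i : (Fin n → M) →ₗ[R] M) = 0 :=
  dif_neg (by omega)

theorem padZero_succ_apply {n j : ℕ} (hj : j < n) (x : Fin n → M) :
    padZero R n (j + 1) x = x ⟨j, hj⟩ := by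
  simp [padZero, hj]

variable (f : M →ₗ[R] N) (n : ℕ)

def cechConerveMap : (Fin n → M) →ₗ[R] (Fin (n + 1) → N) :=
  LinearMap.pi fun j : Fin (n + 1) => f ∘ₗ padZero R n ((j : ℕ) + 1) - f ∘ₗ padZero R n (j : ℕ)

variable {n}

theorem cechConerveMap_apply (x : Fin n → M) (j : Fin (n + 1)) :
    cechConerveMap f n x j = f (padZero R n ((j : ℕ) + 1) x) - f (padZero R n j x) :=
  rfl

variable (R N n) in
/-- `y₀ + ⋯ + y_{k-1}`; only meaningful for `k ≤ n + 1`, since indices are cast into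
`Fin (n + 1)` modulo `n + 1`. -/
def partialSum (k : ℕ) : (Fin (n + 1) → N) →ₗ[R] N :=
  ∑ i ∈ range k, LinearMap.proj (i : Fin (n + 1))

theorem partialSum_apply (k : ℕ) (y : Fin (n + 1) → N) :
    partialSum R N n k y = ∑ i ∈ range k, y i := by
  simp [partialSum]

theorem partialSum_sub_partialSum (y : Fin (n + 1) → N) (j : Fin (n + 1)) :
    partialSum R N n ((j : ℕ) + 1) y - partialSum R N n j y = y j := by
  simp [partialSum_apply, sum_range_succ]

theorem partialSum_diff (u : ℕ → N) {k : ℕ} (hk : k ≤ n + 1) :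
    partialSum R N n k (fun j : Fin (n + 1) => u ((j : ℕ) + 1) - u j) = u k - u 0 := by
  rw [partialSum_apply, ← sum_range_sub]
  refine sum_congr rfl fun i hi => ?_
  rw [Fin.val_cast_of_lt ((mem_range.1 hi).trans_le hk)]

theorem partialSum_cechConerveMap (x : Fin n → M) {k : ℕ} (hk : k ≤ n + 1) :
    partialSum R N n k (cechConerveMap f n x) = f (padZero R n k x) :=
  (partialSum_diff (fun i => f (padZero R n i x)) hk).trans (by simp [padZero_zero])

variable (n) in
def partialSumsMap : (Fin (n + 1) → N) →ₗ[R] N × (Fin n → N ⧸ LinearMap.range f) :=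
  (partialSum R N n (n + 1)).prod
    (LinearMap.pi fun j : Fin n => (LinearMap.range f).mkQ ∘ₗ partialSum R N n ((j : ℕ) + 1))

theorem partialSumsMap_apply (y : Fin (n + 1) → N) :
    partialSumsMap f n y = (partialSum R N n (n + 1) y,
      fun j : Fin n => Submodule.Quotient.mk (partialSum R N n ((j : ℕ) + 1) y)) :=
  rfl

theorem partialSumsMap_eq_zero_iff (y : Fin (n + 1) → N) :
    partialSumsMap f n y = 0 ↔
      partialSum R N n (n + 1) y = 0 ∧
        ∀ j : Fin n, partialSum R N n ((j : ℕ) + 1) y ∈ LinearMap.range f := by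
  simp only [partialSumsMap_apply, Prod.mk_eq_zero, funext_iff, Pi.zero_apply,
    Submodule.Quotient.mk_eq_zero]

theorem ker_partialSumsMap :
    LinearMap.ker (partialSumsMap f n) = LinearMap.range (cechConerveMap f n) := by
  refine le_antisymm (fun y hy => ?_) ?_
  · obtain ⟨htotal, hpartial⟩ := (partialSumsMap_eq_zero_iff f y).1 hy
    choose x hx using hpartial
    have hsums : ∀ k ≤ n + 1, partialSum R N n k y = f (padZero R n k x) := by
      intro k hk
      rcases Nat.lt_or_ge n k with hnk | hkn
      · obtain rfl : k = n + 1 := by omega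
        rw [htotal, padZero_of_lt n hnk, LinearMap.zero_apply, map_zero]
      obtain _ | j := k
      · simp [padZero_zero, partialSum_apply]
      · rw [padZero_succ_apply hkn, hx]
    refine ⟨x, funext fun j => ?_⟩
    rw [cechConerveMap_apply, ← hsums _ (by omega), ← hsums _ (by omega),
      partialSum_sub_partialSum]
  · rintro _ ⟨x, rfl⟩
    refine (partialSumsMap_eq_zero_iff f _).2 ⟨?_, fun j => ⟨x j, ?_⟩⟩
    · rw [partialSum_cechConerveMap f x le_rfl, padZero_of_lt n (by omega), LinearMap.zero_apply,
        map_zero]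
    · rw [partialSum_cechConerveMap f x (by omega), padZero_succ_apply j.isLt]

theorem partialSumsMap_surjective : Function.Surjective (partialSumsMap f n) := by
  rintro ⟨a, c⟩
  choose r hr using fun j => Submodule.Quotient.mk_surjective (LinearMap.range f) (c j)
  -- `u = (0, r₁, …, rₙ, a)`; the preimage is its difference sequence.
  let u : ℕ → N := fun k => if k = 0 then 0 else if h : k - 1 < n then r ⟨k - 1, h⟩ else a
  refine ⟨fun j => u ((j : ℕ) + 1) - u j, Prod.ext ?_ (funext fun j => ?_)⟩
  · change partialSum R N n (n + 1) _ = a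
    rw [partialSum_diff u le_rfl]
    simp [u]
  · change Submodule.Quotient.mk (partialSum R N n ((j : ℕ) + 1) _) = c j
    rw [partialSum_diff u (by omega)]
    simp [u, hr]

variable (n) in
noncomputable def cokernelEquiv :
    ((Fin (n + 1) → N) ⧸ LinearMap.range (cechConerveMap f n)) ≃ₗ[R]
      N × (Fin n → N ⧸ LinearMap.range f) :=
  (Submodule.quotEquivOfEq _ _ (ker_partialSumsMap f).symm).trans
    ((partialSumsMap f n).quotKerEquivOfSurjective (partialSumsMap_surjective f))

end CechConerve

/-- For an `R`-linear map `f : M → N` and `n : ℕ`, let `g : Mⁿ → Nⁿ⁺¹` be the map whose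
`j`-th component (`0 ≤ j ≤ n`) sends `(x₁, …, xₙ)` to `f (x_{j+1}) - f (x_j)`, with the
convention `x₀ = x_{n+1} = 0`.  (Below, `P i` is the extension-by-zero projection sending
`x` to its `i`-th entry in the `1`-based indexing `x₁, …, xₙ`.)  Then the cokernel of `g`
is isomorphic, as an `R`-module, to `N × (N ⧸ range f)ⁿ`. -/
theorem cokernel_cech_conerve_map (R : Type*) [CommRing R]
    (M N : Type*) [AddCommGroup M] [Module R M] [AddCommGroup N] [Module R N]
    (f : M →ₗ[R] N) (n : ℕ)
    (P : ℕ → ((Fin n → M) →ₗ[R] M))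
    (hP : ∀ i : ℕ, P i = if h : 1 ≤ i ∧ i ≤ n
      then LinearMap.proj (⟨i - 1, by omega⟩ : Fin n) else 0)
    (g : (Fin n → M) →ₗ[R] (Fin (n + 1) → N))
    (hg : g = LinearMap.pi fun j : Fin (n + 1) =>
      f ∘ₗ P ((j : ℕ) + 1) - f ∘ₗ P (j : ℕ)) :
    Nonempty (((Fin (n + 1) → N) ⧸ LinearMap.range g) ≃ₗ[R]
      N × (Fin n → N ⧸ LinearMap.range f)) := by
  obtain rfl : P = CechConerve.padZero R n := funext hP
  subst hg
  exact ⟨CechConerve.cokernelEquiv f n⟩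
end

section
/- Let R be a commutative ring and let f : E ⟶ F be a morphism of ℤ-indexed cochain complexes of R-modules. Let (f, −f) : E ⟶ F ⊕ F denote the morphism with components f and −f into the biproduct complex F ⊕ F. Then the mapping cone of (f, −f) is isomorphic, in the homotopy category of cochain complexes of R-modules, to the biproduct F ⊕ Cone(f) of F with the mapping cone of f. -/
/-!
The shear automorphism `(x, y) ↦ (x, x + y)` of `F ⊞ F` carries `(f, -f)` to `(f, 0)`, so the two
mapping cones are isomorphic. The cone of `(f, 0) : E ⟶ F ⊞ G` splits as `Cone(f) ⊞ G`, the
summand `G` receiving nothing from `E`. Both isomorphisms already hold for complexes, before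
passing to the homotopy category.
-/

open CategoryTheory CategoryTheory.Limits

namespace CochainComplex.mappingCone

variable {C : Type*} [Category C] [Preadditive C] [HasBinaryBiproducts C]

noncomputable def mapIso {K₁ L₁ K₂ L₂ : CochainComplex C ℤ} (φ₁ : K₁ ⟶ L₁) (φ₂ : K₂ ⟶ L₂)
    (a : K₁ ≅ K₂) (b : L₁ ≅ L₂) (comm : φ₁ ≫ b.hom = a.hom ≫ φ₂) :
    mappingCone φ₁ ≅ mappingCone φ₂ where
  hom := map φ₁ φ₂ a.hom b.hom comm
  inv := map φ₂ φ₁ a.inv b.inv (by rw [Iso.comp_inv_eq, Category.assoc, comm, Iso.inv_hom_id_assoc])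
  hom_inv_id := by rw [← map_comp]; simp only [Iso.hom_inv_id]; exact map_id φ₁
  inv_hom_id := by rw [← map_comp]; simp only [Iso.inv_hom_id]; exact map_id φ₂

lemma hom_ext {K L M : CochainComplex C ℤ} {φ : K ⟶ L} {g₁ g₂ : mappingCone φ ⟶ M}
    (h₁ : ∀ p q (hpq : p + -1 = q), (inl φ).v p q hpq ≫ g₁.f q = (inl φ).v p q hpq ≫ g₂.f q)
    (h₂ : inr φ ≫ g₁ = inr φ ≫ g₂) : g₁ = g₂ := by
  ext n
  rw [ext_from_iff _ (n + 1) n rfl]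
  exact ⟨h₁ _ _ _, by simp only [← HomologicalComplex.comp_f, h₂]⟩

noncomputable def biprodLiftZeroIso {E F G : CochainComplex C ℤ} (f : E ⟶ F) :
    mappingCone (biprod.lift f (0 : E ⟶ G)) ≅ mappingCone f ⊞ G where
  hom := biprod.lift (map _ f (𝟙 E) biprod.fst (by simp)) (desc _ 0 biprod.snd (by simp))
  inv := biprod.desc (map f _ (𝟙 E) biprod.inl (by apply biprod.hom_ext <;> simp))
    (biprod.inr ≫ inr _)
  hom_inv_id := by
    apply hom_ext
    · intros
      simp [map]
    · apply biprod.hom_ext' <;> simp [map]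
  inv_hom_id := by
    apply biprod.hom_ext' <;> apply biprod.hom_ext <;> simp [map]
    all_goals apply hom_ext <;> intros <;> simp

end CochainComplex.mappingCone

/-- For a morphism `f : E ⟶ F` of `ℤ`-indexed cochain complexes of `R`-modules, the mapping
cone of the morphism `(f, -f) : E ⟶ F ⊞ F` is isomorphic, in the homotopy category, to the
biproduct `F ⊞ Cone(f)` of `F` with the mapping cone of `f`. -/
theorem mappingCone_lift_f_neg_f_iso (R : Type*) [CommRing R]
    {E F : CochainComplex (ModuleCat R) ℤ} (f : E ⟶ F) :
    Nonempty
      ((HomotopyCategory.quotient (ModuleCat R) (ComplexShape.up ℤ)).obj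
          (CochainComplex.mappingCone (biprod.lift f (-f))) ≅
        (HomotopyCategory.quotient (ModuleCat R) (ComplexShape.up ℤ)).obj
          (F ⊞ CochainComplex.mappingCone f)) := by
  have shear : biprod.lift f (-f) ≫ (Biprod.unipotentUpper (𝟙 F)).hom =
      (Iso.refl E).hom ≫ biprod.lift f 0 := by
    apply biprod.hom_ext <;> simp
  exact ⟨(HomotopyCategory.quotient _ _).mapIso
    (CochainComplex.mappingCone.mapIso _ _ _ _ shear ≪≫
      CochainComplex.mappingCone.biprodLiftZeroIso f ≪≫ biprod.braiding _ _)⟩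
end

section
/- Let k be a nontrivial commutative ring and consider the polynomial ring k[u, v] in two variables (i.e. MvPolynomial over the index set Fin 2), equipped with the ℤ-valued weight function assigning weight −2 to u and weight 2 to v. Then a polynomial p ∈ k[u, v] is weighted homogeneous of weighted degree 0 if and only if p lies in the k-span of the family {(uv)^n : n ∈ ℕ}; moreover this family is linearly independent over k, so the weighted-degree-0 homogeneous component of k[u, v] is a free k-module with basis {(uv)^n : n ∈ ℕ} (in particular it is a countable direct sum ⊕_ℕ k, not a product). -/
/-!
A monomial `u^i v^j` has weight `2 (j - i)`, so the weight-`0` monomials are exactly the powers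
`(uv)^n`. A weighted homogeneous component is spanned by the monomials of that weight, and
distinct monomials are linearly independent.
-/

open MvPolynomial

theorem MvPolynomial.weightedHomogeneousSubmodule_eq_span_monomial {R σ M : Type*}
    [CommSemiring R] [AddCommMonoid M] (w : σ → M) (m : M) :
    weightedHomogeneousSubmodule R w m =
      .span R ((monomial · 1) '' {d | Finsupp.weight w d = m}) :=
  (weightedHomogeneousSubmodule_eq_finsupp_supported R w m).trans (restrictSupport_eq_span R _)

theorem MvPolynomial.X_mul_X_pow_eq_monomial {R σ : Type*} [CommSemiring R] (i j : σ) (n : ℕ) :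
    (X i * X j : MvPolynomial σ R) ^ n =
      monomial (Finsupp.single i n + Finsupp.single j n) 1 := by
  rw [mul_pow, X_pow_eq_monomial, X_pow_eq_monomial, monomial_mul, one_mul]

theorem Finsupp.single_add_single_injective {σ : Type*} (i j : σ) :
    Function.Injective fun n : ℕ => single i n + single j n := by
  intro m n h
  have hdeg := congrArg degree h
  simp only [map_add, degree_single] at hdeg
  omega

theorem MvPolynomial.linearIndependent_X_mul_X_pow {R σ : Type*} [CommSemiring R] (i j : σ) :
    LinearIndependent R fun n : ℕ => (X i * X j : MvPolynomial σ R) ^ n := by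
  simp only [X_mul_X_pow_eq_monomial]
  exact (basisMonomials σ R).linearIndependent.comp _ (Finsupp.single_add_single_injective i j)

theorem Finsupp.weight_neg_self_eq_zero_iff {a : ℤ} (ha : a ≠ 0) (d : Fin 2 →₀ ℕ) :
    weight ![-a, a] d = 0 ↔ d 0 = d 1 := by
  rw [weight_apply, sum_fintype _ _ (by simp)]
  simp only [Fin.sum_univ_two, Int.nsmul_eq_mul, Matrix.cons_val_zero, Matrix.cons_val_one,
    Matrix.cons_val_fin_one, mul_neg]
  rw [neg_add_eq_sub, ← sub_mul, mul_eq_zero, or_iff_left ha, sub_eq_zero, eq_comm, Nat.cast_inj]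

theorem Finsupp.setOf_weight_neg_self_eq_zero {a : ℤ} (ha : a ≠ 0) :
    {d : Fin 2 →₀ ℕ | weight ![-a, a] d = 0} = Set.range fun n => single 0 n + single 1 n := by
  ext d
  simp only [Set.mem_ofPred_eq, weight_neg_self_eq_zero_iff ha, Set.mem_range]
  constructor
  · intro h
    refine ⟨d 0, ?_⟩
    ext i
    fin_cases i <;> simp [h]
  · rintro ⟨n, rfl⟩
    simp

theorem weightedHomogeneous_degree_zero_span_uv_pows_general
    (k : Type*) [CommRing k] :
    (∀ p : MvPolynomial (Fin 2) k,
        p.IsWeightedHomogeneous (![(-2 : ℤ), 2]) 0 ↔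
          p ∈ Submodule.span k
            (Set.range fun n : ℕ => (X 0 * X 1 : MvPolynomial (Fin 2) k) ^ n)) ∧
      LinearIndependent k (fun n : ℕ => (X 0 * X 1 : MvPolynomial (Fin 2) k) ^ n) := by
  have hspan : weightedHomogeneousSubmodule k ![(-2 : ℤ), 2] 0 =
      .span k (Set.range fun n : ℕ => (X 0 * X 1 : MvPolynomial (Fin 2) k) ^ n) := by
    rw [weightedHomogeneousSubmodule_eq_span_monomial,
      Finsupp.setOf_weight_neg_self_eq_zero two_ne_zero, ← Set.range_comp]
    simp only [Function.comp_def, X_mul_X_pow_eq_monomial]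
  exact ⟨fun p => by rw [← mem_weightedHomogeneousSubmodule, hspan],
    linearIndependent_X_mul_X_pow 0 1⟩

/-- Consider `k[u, v] = MvPolynomial (Fin 2) k` over a nontrivial commutative ring `k`,
with the `ℤ`-valued weight assigning weight `-2` to `u = X 0` and weight `2` to `v = X 1`.
Then a polynomial `p` is weighted homogeneous of weighted degree `0` if and only if it lies
in the `k`-span of the family `{(uv)^n : n ∈ ℕ}`; moreover this family is linearly
independent over `k`.  In particular, the weighted-degree-`0` homogeneous component of
`k[u, v]` is a free `k`-module with basis `{(uv)^n : n ∈ ℕ}`, a countable direct sum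
`⊕_ℕ k` rather than a product. -/
theorem weightedHomogeneous_degree_zero_span_uv_pows
    (k : Type*) [CommRing k] [Nontrivial k] :
    (∀ p : MvPolynomial (Fin 2) k,
        p.IsWeightedHomogeneous (![(-2 : ℤ), 2]) 0 ↔
          p ∈ Submodule.span k
            (Set.range fun n : ℕ => (X 0 * X 1 : MvPolynomial (Fin 2) k) ^ n)) ∧
      LinearIndependent k (fun n : ℕ => (X 0 * X 1 : MvPolynomial (Fin 2) k) ^ n) :=
  weightedHomogeneous_degree_zero_span_uv_pows_general k
end
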